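/- arXiv:1208.2644 — 2 statements merged into one kernel-verified Lean document; each statement's English description precedes it below -/
import Mathlib

section
/- Let Q ∈ L²(ℝ³), and let Θ : ℝ³ → [0, ∞) be a bounded measurable function whose support is contained in some closed ball B(0,R). Let (v_n) and (w_n) be sequences that are bounded in L²(ℝ³) and such that v_n → 0 strongly in L²(K) for every compact set K ⊂ ℝ³. Then lim_{n→∞} ∫_{ℝ³} (Θ * |Q v_n|)(x) · |Q(x) w_n(x)| dx = 0. -/
/-!
Since `0 ≤ Θ ≤ M`, the double integral is at most `M ‖Q vₙ‖₁ ‖Q wₙ‖₁`, and by Cauchy–Schwarz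
`‖Q wₙ‖₁ ≤ ‖Q‖₂ ‖wₙ‖₂` stays bounded. It remains to see that `‖Q vₙ‖₁ → 0`. Splitting space
into a large ball `B` and its complement,
`‖Q vₙ‖₁ ≤ ‖Q‖₂ ‖vₙ‖_{L²(B)} + ‖Q‖_{L²(Bᶜ)} sup ‖vₙ‖₂`: the first term tends to zero by the
local convergence of `vₙ`, the second is small for `B` large because `Q ∈ L²`.
-/

open MeasureTheory Filter Metric
open scoped ENNReal Topology

lemma ENNReal.tendsto_nhds_zero_of_le_add {ι κ : Type*} {l : Filter ι} {l' : Filter κ} [l'.NeBot]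
    {a : ι → ℝ≥0∞} {c : κ → ι → ℝ≥0∞} {d : κ → ℝ≥0∞} (hac : ∀ k i, a i ≤ c k i + d k)
    (hc : ∀ k, Tendsto (c k) l (𝓝 0)) (hd : Tendsto d l' (𝓝 0)) :
    Tendsto a l (𝓝 0) := by
  refine ENNReal.tendsto_nhds_zero.2 fun ε hε => ?_
  have hε2 : 0 < ε / 2 := ENNReal.half_pos hε.ne'
  obtain ⟨k, hk⟩ := (hd.eventually (ge_mem_nhds hε2)).exists
  filter_upwards [(hc k).eventually (ge_mem_nhds hε2)] with i hi
  calc a i ≤ c k i + d k := hac k i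
    _ ≤ ε / 2 + ε / 2 := add_le_add hi hk
    _ = ε := ENNReal.add_halves ε

section

variable {α : Type*} [MeasurableSpace α] {μ : Measure α}

theorem MeasureTheory.MemLp.tendsto_eLpNorm_restrict_compl_closedBall [PseudoMetricSpace α]
    [OpensMeasurableSpace α] {E : Type*} [NormedAddCommGroup E] {p : ℝ≥0∞} {f : α → E}
    (hf : MemLp f p μ) (hp : p ≠ ∞) (x : α) :
    Tendsto (fun n : ℕ => eLpNorm f p (μ.restrict (closedBall x n)ᶜ)) atTop (𝓝 0) := by
  rcases eq_or_ne p 0 with rfl | hp₀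
  · simp
  set ν := μ.withDensity fun y => ‖f y‖ₑ ^ p.toReal
  have hν : ∀ n : ℕ, eLpNorm f p (μ.restrict (closedBall x n)ᶜ) =
      ν (closedBall x n)ᶜ ^ (1 / p.toReal) := fun n => by
    rw [eLpNorm_eq_lintegral_rpow_enorm_toReal hp₀ hp,
      withDensity_apply _ measurableSet_closedBall.compl]
  have hν_fin : ν Set.univ ≠ ∞ := by
    rw [withDensity_apply _ MeasurableSet.univ, Measure.restrict_univ]
    exact (lintegral_rpow_enorm_lt_top_of_eLpNorm_lt_top hp₀ hp hf.2).ne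
  have hν_tail : Tendsto (fun n : ℕ => ν (closedBall x n)ᶜ) atTop (𝓝 0) := by
    have h := tendsto_measure_iInter_atTop (μ := ν) (s := fun n : ℕ => (closedBall x n)ᶜ)
      (fun _ => measurableSet_closedBall.compl.nullMeasurableSet)
      (fun m n hmn => Set.compl_subset_compl.2
        (closedBall_subset_closedBall (by exact_mod_cast hmn)))
      ⟨0, ne_top_of_le_ne_top hν_fin (measure_mono (Set.subset_univ _))⟩
    rwa [← Set.compl_iUnion, iUnion_closedBall_nat x, Set.compl_univ, measure_empty] at h
  simp_rw [hν]
  simpa [Function.comp_def, ENNReal.zero_rpow_of_pos, ENNReal.toReal_pos hp₀ hp] using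
    ((ENNReal.continuous_rpow_const (y := 1 / p.toReal)).tendsto 0).comp hν_tail

theorem eLpNorm_one_mul_le_add_restrict_compl {𝕜 : Type*} [NormedRing 𝕜] {f g : α → 𝕜}
    (hf : AEStronglyMeasurable f μ) (hg : AEStronglyMeasurable g μ) {K : Set α}
    (hK : MeasurableSet K) :
    eLpNorm (f * g) 1 μ ≤
      eLpNorm f 2 μ * eLpNorm g 2 (μ.restrict K) + eLpNorm f 2 (μ.restrict Kᶜ) * eLpNorm g 2 μ := by
  rw [eLpNorm_one_eq_lintegral_enorm, ← lintegral_add_compl _ hK,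
    ← eLpNorm_one_eq_lintegral_enorm, ← eLpNorm_one_eq_lintegral_enorm]
  gcongr
  · exact (eLpNorm_smul_le_mul_eLpNorm hg.restrict hf.restrict).trans
      (mul_le_mul_left (eLpNorm_mono_measure _ Measure.restrict_le_self) _)
  · exact (eLpNorm_smul_le_mul_eLpNorm hg.restrict hf.restrict).trans
      (mul_le_mul_right (eLpNorm_mono_measure _ Measure.restrict_le_self) _)

theorem tendsto_eLpNorm_one_mul_of_tendsto_eLpNorm_restrict [PseudoMetricSpace α] [ProperSpace α]
    [OpensMeasurableSpace α] {𝕜 : Type*} [NormedRing 𝕜] {f : α → 𝕜} {g : ℕ → α → 𝕜}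
    (hf : MemLp f 2 μ) (hg : ∀ n, AEStronglyMeasurable (g n) μ) {C : ℝ≥0∞} (hC : C ≠ ∞)
    (hg_bdd : ∀ n, eLpNorm (g n) 2 μ ≤ C)
    (hg_loc : ∀ K, IsCompact K → Tendsto (fun n => eLpNorm (g n) 2 (μ.restrict K)) atTop (𝓝 0)) :
    Tendsto (fun n => eLpNorm (f * g n) 1 μ) atTop (𝓝 0) := by
  rcases isEmpty_or_nonempty α with _ | ⟨⟨x⟩⟩
  · simp [Measure.eq_zero_of_isEmpty μ]
  refine ENNReal.tendsto_nhds_zero_of_le_add (l' := atTop)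
    (c := fun (k : ℕ) n => eLpNorm f 2 μ * eLpNorm (g n) 2 (μ.restrict (closedBall x k)))
    (d := fun k : ℕ => eLpNorm f 2 (μ.restrict (closedBall x k)ᶜ) * C) (fun k n => ?_)
    (fun k => ?_) ?_
  · exact (eLpNorm_one_mul_le_add_restrict_compl hf.1 (hg n) measurableSet_closedBall).trans
      (add_le_add le_rfl (mul_le_mul_right (hg_bdd n) _))
  · simpa using ENNReal.Tendsto.const_mul (hg_loc _ (isCompact_closedBall x k))
      (Or.inr hf.eLpNorm_ne_top)
  · simpa using ENNReal.Tendsto.mul_const (hf.tendsto_eLpNorm_restrict_compl_closedBall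
      ENNReal.ofNat_ne_top x) (Or.inr hC)

theorem lintegral_lintegral_mul_le {β : Type*} [MeasurableSpace β] {ν : Measure β}
    {k : α → β → ℝ≥0∞} {M : ℝ≥0∞} (hM : M ≠ ∞) (hk : ∀ x y, k x y ≤ M) (f : β → ℝ≥0∞)
    {g : α → ℝ≥0∞} (hg : AEMeasurable g μ) :
    ∫⁻ x, (∫⁻ y, k x y * f y ∂ν) * g x ∂μ ≤ M * (∫⁻ y, f y ∂ν) * ∫⁻ x, g x ∂μ := by
  calc ∫⁻ x, (∫⁻ y, k x y * f y ∂ν) * g x ∂μ ≤ ∫⁻ x, M * (∫⁻ y, f y ∂ν) * g x ∂μ := by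
        gcongr with x
        exact (lintegral_mono fun y => mul_le_mul_left (hk x y) _).trans_eq
          (lintegral_const_mul' M f hM)
    _ = M * (∫⁻ y, f y ∂ν) * ∫⁻ x, g x ∂μ := lintegral_const_mul'' _ hg

end

theorem stmt_7_general (Q : EuclideanSpace ℝ (Fin 3) → ℝ) (hQ : MemLp Q 2 volume)
    (Θ : EuclideanSpace ℝ (Fin 3) → ℝ)
    (hΘ_nonneg : ∀ x, 0 ≤ Θ x) (hΘ_bdd : ∃ M : ℝ, ∀ x, Θ x ≤ M)
    (v w : ℕ → EuclideanSpace ℝ (Fin 3) → ℝ)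
    (hv_meas : ∀ n, AEStronglyMeasurable (v n) volume)
    (hw_meas : ∀ n, AEStronglyMeasurable (w n) volume)
    (hv_bdd : ∃ M : ℝ, ∀ n, eLpNorm (v n) 2 volume ≤ ENNReal.ofReal M)
    (hw_bdd : ∃ M : ℝ, ∀ n, eLpNorm (w n) 2 volume ≤ ENNReal.ofReal M)
    (hv_loc : ∀ K : Set (EuclideanSpace ℝ (Fin 3)), IsCompact K →
      Tendsto (fun n => eLpNorm (v n) 2 (volume.restrict K)) atTop (nhds 0)) :
    Tendsto (fun n =>
        ∫⁻ x, (∫⁻ y, ENNReal.ofReal (Θ (x - y) * |Q y * v n y|)) *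
          ENNReal.ofReal (|Q x * w n x|))
      atTop (nhds 0) := by
  obtain ⟨M, hM⟩ := hΘ_bdd
  obtain ⟨Mv, hMv⟩ := hv_bdd
  obtain ⟨Mw, hMw⟩ := hw_bdd
  have hQv := tendsto_eLpNorm_one_mul_of_tendsto_eLpNorm_restrict hQ hv_meas
    ENNReal.ofReal_ne_top hMv hv_loc
  have hQw_bdd : ∀ n, eLpNorm (Q * w n) 1 volume ≤ eLpNorm Q 2 volume * ENNReal.ofReal Mw :=
    fun n => (eLpNorm_smul_le_mul_eLpNorm (hw_meas n) hQ.1).trans (mul_le_mul_right (hMw n) _)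
  have hbound : ∀ n, ∫⁻ x, (∫⁻ y, ENNReal.ofReal (Θ (x - y) * |Q y * v n y|)) *
      ENNReal.ofReal (|Q x * w n x|) ≤ ENNReal.ofReal M * eLpNorm (Q * v n) 1 volume *
        (eLpNorm Q 2 volume * ENNReal.ofReal Mw) := by
    intro n
    simp only [ENNReal.ofReal_mul (hΘ_nonneg _), ← Real.enorm_eq_ofReal_abs]
    refine (lintegral_lintegral_mul_le ENNReal.ofReal_ne_top
      (fun x y => ENNReal.ofReal_le_ofReal (hM (x - y))) _ ?_).trans ?_
    · exact (hQ.1.mul (hw_meas n)).enorm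
    · simp only [← eLpNorm_one_eq_lintegral_enorm]
      exact mul_le_mul_right (hQw_bdd n) _
  refine tendsto_of_tendsto_of_tendsto_of_le_of_le tendsto_const_nhds ?_ (fun _ => zero_le)
    hbound
  simpa using ENNReal.Tendsto.mul_const
    (ENNReal.Tendsto.const_mul hQv (Or.inr ENNReal.ofReal_ne_top))
    (Or.inr (ENNReal.mul_ne_top hQ.eLpNorm_ne_top ENNReal.ofReal_ne_top))

/-- Let `Q ∈ L²(ℝ³)`, let `Θ : ℝ³ → [0,∞)` be bounded, measurable, with support contained in
a closed ball `B(0,R)`, and let `(v_n)`, `(w_n)` be bounded sequences in `L²(ℝ³)` with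
`v_n → 0` in `L²(K)` for every compact `K`. Then
`∫ (Θ * |Q v_n|)(x) |Q(x) w_n(x)| dx → 0`. -/
theorem stmt_7 (Q : EuclideanSpace ℝ (Fin 3) → ℝ) (hQ : MemLp Q 2 volume)
    (Θ : EuclideanSpace ℝ (Fin 3) → ℝ) (hΘ_meas : Measurable Θ)
    (hΘ_nonneg : ∀ x, 0 ≤ Θ x) (hΘ_bdd : ∃ M : ℝ, ∀ x, Θ x ≤ M)
    (hΘ_supp : ∃ R : ℝ, Function.support Θ ⊆ Metric.closedBall 0 R)
    (v w : ℕ → EuclideanSpace ℝ (Fin 3) → ℝ)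
    (hv_meas : ∀ n, AEStronglyMeasurable (v n) volume)
    (hw_meas : ∀ n, AEStronglyMeasurable (w n) volume)
    (hv_bdd : ∃ M : ℝ, ∀ n, eLpNorm (v n) 2 volume ≤ ENNReal.ofReal M)
    (hw_bdd : ∃ M : ℝ, ∀ n, eLpNorm (w n) 2 volume ≤ ENNReal.ofReal M)
    (hv_loc : ∀ K : Set (EuclideanSpace ℝ (Fin 3)), IsCompact K →
      Tendsto (fun n => eLpNorm (v n) 2 (volume.restrict K)) atTop (nhds 0)) :
    Tendsto (fun n =>
        ∫⁻ x, (∫⁻ y, ENNReal.ofReal (Θ (x - y) * |Q y * v n y|)) *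
          ENNReal.ofReal (|Q x * w n x|))
      atTop (nhds 0) :=
  stmt_7_general Q hQ Θ hΘ_nonneg hΘ_bdd v w hv_meas hw_meas hv_bdd hw_bdd hv_loc
end

section
/- Let Q ∈ L²(ℝ³) ∩ L⁶(ℝ³). Let (v_n) and (w_n) be sequences that are bounded in L²(ℝ³) and such that v_n → 0 strongly in L²(K) for every compact set K ⊂ ℝ³. Then lim_{n→∞} ∫_{ℝ³} ( |·|⁻¹ * |Q v_n| )(x) · |Q(x) w_n(x)| dx = 0, where ( |·|⁻¹ * f )(x) = ∫_{ℝ³} f(y)/|x−y| dy. -/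
/-!
Split the Coulomb kernel as `|z|⁻¹ ≤ 1_{|z| < δ} |z|⁻¹ + δ⁻¹`. The singular part is controlled by
Young's inequality `∫∫ f(y) k(x - y) g(x) ≤ ‖f‖_{3/2} ‖g‖_{3/2} ‖k‖_{3/2}` together with Hölder's
`‖Q v‖_{3/2} ≤ ‖Q‖₆ ‖v‖₂`; as `|z|⁻¹` is locally in `L^{3/2}(ℝ³)`, it is uniformly small for small
`δ`. The bounded part is at most `δ⁻¹ ‖Q v_n‖₁ ‖Q w_n‖₁`, and `‖Q v_n‖₁ → 0`: on a large ball by the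
local convergence of `v_n`, outside it because the `L²` tail of `Q` is small.
-/

open MeasureTheory Filter Metric Module
open scoped ENNReal Topology

theorem ENNReal.tendsto_nhds_zero_of_eventually_le_add {ι κ : Type*} {l : Filter ι}
    {l' : Filter κ} [l'.NeBot] {a : ι → ℝ≥0∞} {b : κ → ℝ≥0∞} {c : κ → ι → ℝ≥0∞}
    (hb : Tendsto b l' (𝓝 0)) (hc : ∀ j, Tendsto (c j) l (𝓝 0))
    (h : ∀ᶠ j in l', ∀ i, a i ≤ b j + c j i) : Tendsto a l (𝓝 0) := by
  rw [ENNReal.tendsto_nhds_zero]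
  intro ε hε
  have hε2 : 0 < ε / 2 := ENNReal.half_pos hε.ne'
  obtain ⟨j, hbj, hj⟩ := ((ENNReal.tendsto_nhds_zero.1 hb _ hε2).and h).exists
  filter_upwards [ENNReal.tendsto_nhds_zero.1 (hc j) _ hε2] with i hci
  calc a i ≤ b j + c j i := hj i
    _ ≤ ε / 2 + ε / 2 := add_le_add hbj hci
    _ = ε := ENNReal.add_halves ε

theorem ENNReal.mul_mul_eq_rpow_three_halves_mul (a b c : ℝ≥0∞) :
    a * b * c = (a ^ (3/2 : ℝ) * b ^ (3/2 : ℝ)) ^ (1/3 : ℝ) *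
      (c ^ (3/2 : ℝ) * a ^ (3/2 : ℝ)) ^ (1/3 : ℝ) *
        (c ^ (3/2 : ℝ) * b ^ (3/2 : ℝ)) ^ (1/3 : ℝ) := by
  have h (x y : ℝ≥0∞) :
      (x ^ (3/2 : ℝ) * y ^ (3/2 : ℝ)) ^ (1/3 : ℝ) = x ^ (1/2 : ℝ) * y ^ (1/2 : ℝ) := by
    rw [ENNReal.mul_rpow_of_nonneg _ _ (by norm_num), ← ENNReal.rpow_mul, ← ENNReal.rpow_mul]
    norm_num
  have hsq (x : ℝ≥0∞) : x ^ (1/2 : ℝ) * x ^ (1/2 : ℝ) = x := by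
    rw [← ENNReal.rpow_add_of_nonneg _ _ (by norm_num) (by norm_num)]
    norm_num
  rw [h, h, h]
  calc a * b * c = (a ^ (1/2 : ℝ) * a ^ (1/2 : ℝ)) * (b ^ (1/2 : ℝ) * b ^ (1/2 : ℝ)) *
      (c ^ (1/2 : ℝ) * c ^ (1/2 : ℝ)) := by rw [hsq, hsq, hsq]
    _ = _ := by ring

theorem eLpNorm_mul_le_mul_eLpNorm {α 𝕜 : Type*} [MeasurableSpace α] {μ : Measure α}
    [NormedRing 𝕜] {p q r : ℝ≥0∞} [ENNReal.HolderTriple p q r] {φ f : α → 𝕜}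
    (hφ : AEStronglyMeasurable φ μ) (hf : AEStronglyMeasurable f μ) :
    eLpNorm (φ * f) r μ ≤ eLpNorm φ p μ * eLpNorm f q μ := by
  simpa only [smul_eq_mul] using eLpNorm_smul_le_mul_eLpNorm hf hφ

theorem eLpNorm_one_eq_restrict_add_restrict_compl {α ε : Type*} [MeasurableSpace α] [ENorm ε]
    {μ : Measure α} (f : α → ε) {s : Set α} (hs : MeasurableSet s) :
    eLpNorm f 1 μ = eLpNorm f 1 (μ.restrict s) + eLpNorm f 1 (μ.restrict sᶜ) := by
  simp only [eLpNorm_one_eq_lintegral_enorm]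
  exact (lintegral_add_compl _ hs).symm

theorem tendsto_eLpNorm_restrict_of_antitone {α F : Type*} [MeasurableSpace α] {μ : Measure α}
    [NormedAddCommGroup F] {p : ℝ≥0∞} (hp0 : p ≠ 0) (hp : p ≠ ∞) {f : α → F}
    {s : ℕ → Set α} (hs : ∀ n, MeasurableSet (s n)) (hanti : Antitone s)
    (hnull : μ (⋂ n, s n) = 0) (hfin : eLpNorm f p (μ.restrict (s 0)) ≠ ∞) :
    Tendsto (fun n => eLpNorm f p (μ.restrict (s n))) atTop (𝓝 0) := by
  set ν := μ.withDensity fun x => ‖f x‖ₑ ^ p.toReal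
  have hν : ∀ n, eLpNorm f p (μ.restrict (s n)) = ν (s n) ^ (1 / p.toReal) := fun n => by
    rw [eLpNorm_eq_lintegral_rpow_enorm_toReal hp0 hp, withDensity_apply _ (hs n)]
  have hpos : 0 < 1 / p.toReal := one_div_pos.2 (ENNReal.toReal_pos hp0 hp)
  have hν0 : Tendsto (fun n => ν (s n)) atTop (𝓝 0) := by
    have hfin' : ν (s 0) ≠ ∞ := by
      rw [withDensity_apply _ (hs 0)]
      exact (lintegral_rpow_enorm_lt_top_of_eLpNorm_lt_top hp0 hp hfin.lt_top).ne
    have := tendsto_measure_iInter_atTop (fun n => (hs n).nullMeasurableSet) hanti ⟨0, hfin'⟩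
    rwa [withDensity_absolutelyContinuous μ _ hnull] at this
  have := (ENNReal.continuous_rpow_const (y := 1 / p.toReal)).tendsto 0 |>.comp hν0
  rw [ENNReal.zero_rpow_of_pos hpos] at this
  simp_rw [hν]
  exact this

theorem tendsto_eLpNorm_one_mul_of_tendsto_restrict_closedBall {α ι : Type*} [MeasurableSpace α]
    [PseudoMetricSpace α] [OpensMeasurableSpace α] {μ : Measure α} (x₀ : α) {l : Filter ι}
    {Q : α → ℝ} {v : ι → α → ℝ} (hQ : MemLp Q 2 μ) (hv : ∀ i, AEStronglyMeasurable (v i) μ)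
    {M : ℝ≥0∞} (hM : M ≠ ∞) (hvM : ∀ i, eLpNorm (v i) 2 μ ≤ M)
    (hloc : ∀ r : ℕ, Tendsto (fun i => eLpNorm (v i) 2 (μ.restrict (closedBall x₀ r))) l (𝓝 0)) :
    Tendsto (fun i => eLpNorm (Q * v i) 1 μ) l (𝓝 0) := by
  have htail : Tendsto (fun r : ℕ => eLpNorm Q 2 (μ.restrict (closedBall x₀ r)ᶜ)) atTop (𝓝 0) := by
    refine tendsto_eLpNorm_restrict_of_antitone (by simp) (by simp)
      (fun _ => measurableSet_closedBall.compl)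
      (fun m n hmn => Set.compl_subset_compl.2
        (closedBall_subset_closedBall (by exact_mod_cast hmn))) ?_ ?_
    · rw [← Set.compl_iUnion, iUnion_closedBall_nat, Set.compl_univ, measure_empty]
    · exact ((eLpNorm_mono_measure _ Measure.restrict_le_self).trans_lt hQ.eLpNorm_lt_top).ne
  refine ENNReal.tendsto_nhds_zero_of_eventually_le_add (l' := atTop)
    (b := fun r : ℕ => eLpNorm Q 2 (μ.restrict (closedBall x₀ r)ᶜ) * M)
    (c := fun r i => eLpNorm Q 2 μ * eLpNorm (v i) 2 (μ.restrict (closedBall x₀ r)))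
    ?_ (fun r => ?_) (Eventually.of_forall fun r i => ?_)
  · simpa using ENNReal.Tendsto.mul_const htail (Or.inr hM)
  · simpa using ENNReal.Tendsto.const_mul (hloc r) (Or.inr hQ.eLpNorm_ne_top)
  · rw [eLpNorm_one_eq_restrict_add_restrict_compl _ (measurableSet_closedBall (x := x₀) (ε := r)),
      add_comm (eLpNorm _ 1 (μ.restrict (closedBall x₀ r)))]
    refine add_le_add ?_ ?_
    · refine (eLpNorm_mul_le_mul_eLpNorm (p := 2) (q := 2) hQ.1.restrict (hv i).restrict).trans ?_
      exact mul_le_mul_right ((eLpNorm_mono_measure _ Measure.restrict_le_self).trans (hvM i)) _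
    · refine (eLpNorm_mul_le_mul_eLpNorm (p := 2) (q := 2) hQ.1.restrict (hv i).restrict).trans ?_
      exact mul_le_mul_left (eLpNorm_mono_measure _ Measure.restrict_le_self) _

theorem ENNReal.lintegral_mul_rpow_one_third_le {α : Type*} [MeasurableSpace α] {μ : Measure α}
    {f g h : α → ℝ≥0∞} (hf : AEMeasurable f μ) (hg : AEMeasurable g μ) (hh : AEMeasurable h μ) :
    ∫⁻ a, f a ^ (1/3 : ℝ) * g a ^ (1/3 : ℝ) * h a ^ (1/3 : ℝ) ∂μ ≤
      (∫⁻ a, f a ∂μ) ^ (1/3 : ℝ) * (∫⁻ a, g a ∂μ) ^ (1/3 : ℝ) * (∫⁻ a, h a ∂μ) ^ (1/3 : ℝ) := by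
  have := ENNReal.lintegral_prod_norm_pow_le (μ := μ) Finset.univ (f := ![f, g, h])
    (p := fun _ => 1/3) (fun i _ => by fin_cases i <;> assumption) (by norm_num)
    (fun _ _ => by norm_num)
  simpa only [Fin.prod_univ_three, Matrix.cons_val_zero, Matrix.cons_val_one,
    Matrix.cons_val_two, Matrix.head_cons, Matrix.tail_cons] using this

section Young

variable {G : Type*} [MeasurableSpace G] [AddCommGroup G] [MeasurableAdd₂ G] [MeasurableNeg G]
  {μ : Measure G} [SFinite μ] [μ.IsAddLeftInvariant]

theorem lintegral_prod_comp_snd_mul_comp_sub {F K : G → ℝ≥0∞} (hF : AEMeasurable F μ)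
    (hK : Measurable K) :
    ∫⁻ z : G × G, F z.2 * K (z.1 - z.2) ∂μ.prod μ = (∫⁻ y, F y ∂μ) * ∫⁻ z, K z ∂μ := by
  rw [lintegral_prod_symm (fun z => F z.2 * K (z.1 - z.2))
    (hF.comp_snd.mul (hK.comp measurable_sub).aemeasurable), ← lintegral_mul_const'' _ hF]
  refine lintegral_congr fun y => ?_
  rw [← lintegral_sub_right_eq_self K y]
  exact lintegral_const_mul (F y) (hK.comp (measurable_sub_const y))

theorem lintegral_prod_comp_fst_mul_comp_sub [μ.IsNegInvariant] {F K : G → ℝ≥0∞}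
    (hF : AEMeasurable F μ) (hK : Measurable K) :
    ∫⁻ z : G × G, F z.1 * K (z.1 - z.2) ∂μ.prod μ = (∫⁻ x, F x ∂μ) * ∫⁻ z, K z ∂μ := by
  rw [lintegral_prod (fun z => F z.1 * K (z.1 - z.2))
    (hF.comp_fst.mul (hK.comp measurable_sub).aemeasurable), ← lintegral_mul_const'' _ hF]
  refine lintegral_congr fun x => ?_
  rw [← lintegral_sub_left_eq_self K x]
  exact lintegral_const_mul (F x) (hK.comp (measurable_const_sub x))

/-- Young's convolution inequality with all three exponents equal to `3/2`. -/
theorem lintegral_enorm_mul_sub_le_eLpNorm_mul [μ.IsNegInvariant] {f g k : G → ℝ}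
    (hf : AEStronglyMeasurable f μ) (hg : AEStronglyMeasurable g μ) (hk : Measurable k) :
    ∫⁻ x, (∫⁻ y, ‖f y‖ₑ * ‖k (x - y)‖ₑ ∂μ) * ‖g x‖ₑ ∂μ ≤
      eLpNorm f (3/2) μ * eLpNorm g (3/2) μ * eLpNorm k (3/2) μ := by
  set F : G → ℝ≥0∞ := fun y => ‖f y‖ₑ ^ (3/2 : ℝ)
  set Gx : G → ℝ≥0∞ := fun x => ‖g x‖ₑ ^ (3/2 : ℝ)
  set K : G → ℝ≥0∞ := fun z => ‖k z‖ₑ ^ (3/2 : ℝ)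
  have hF : AEMeasurable F μ := hf.enorm.pow_const _
  have hG : AEMeasurable Gx μ := hg.enorm.pow_const _
  have hK : Measurable K := hk.enorm.pow_const _
  have hKsub : AEMeasurable (fun z : G × G => K (z.1 - z.2)) (μ.prod μ) :=
    (hK.comp measurable_sub).aemeasurable
  have heLp (φ : G → ℝ) : eLpNorm φ (3/2) μ = (∫⁻ x, ‖φ x‖ₑ ^ (3/2 : ℝ) ∂μ) ^ (2/3 : ℝ) := by
    rw [eLpNorm_eq_lintegral_rpow_enorm_toReal (by simp) (by finiteness)]
    norm_num
  have hprod : ∫⁻ x, (∫⁻ y, ‖f y‖ₑ * ‖k (x - y)‖ₑ ∂μ) * ‖g x‖ₑ ∂μ =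
      ∫⁻ z : G × G, (F z.2 * K (z.1 - z.2)) ^ (1/3 : ℝ) * (Gx z.1 * F z.2) ^ (1/3 : ℝ) *
        (Gx z.1 * K (z.1 - z.2)) ^ (1/3 : ℝ) ∂μ.prod μ := by
    simp_rw [F, Gx, K, ← ENNReal.mul_mul_eq_rpow_three_halves_mul]
    refine Eq.trans ?_ (lintegral_prod _ (hf.enorm.comp_snd.mul
      (hk.comp measurable_sub).enorm.aemeasurable |>.mul hg.enorm.comp_fst)).symm
    refine lintegral_congr fun x => (lintegral_mul_const'' _ ?_).symm
    exact hf.enorm.mul (hk.comp (measurable_const_sub x)).enorm.aemeasurable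
  rw [hprod]
  refine (ENNReal.lintegral_mul_rpow_one_third_le (hF.comp_snd.mul hKsub)
    (hG.comp_fst.mul hF.comp_snd) (hG.comp_fst.mul hKsub)).trans_eq ?_
  simp only [Pi.mul_apply]
  rw [lintegral_prod_comp_snd_mul_comp_sub hF hK, lintegral_prod_mul hG hF,
    lintegral_prod_comp_fst_mul_comp_sub hG hK, heLp f, heLp g, heLp k,
    mul_right_comm (_ ^ (2/3 : ℝ)),
    ENNReal.mul_mul_eq_rpow_three_halves_mul ((∫⁻ y, F y ∂μ) ^ (2/3 : ℝ))]
  simp_rw [← ENNReal.rpow_mul]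
  norm_num
  rfl

end Young

theorem enorm_inv_norm_le_indicator_ball_add {E : Type*} [SeminormedAddCommGroup E] {δ : ℝ}
    (hδ : 0 < δ) (z : E) :
    ‖‖z‖⁻¹‖ₑ ≤ ‖(ball (0 : E) δ).indicator (fun z => ‖z‖⁻¹) z‖ₑ + ENNReal.ofReal δ⁻¹ := by
  by_cases hz : z ∈ ball (0 : E) δ
  · rw [Set.indicator_of_mem hz]
    exact le_self_add
  · rw [Set.indicator_of_notMem hz, enorm_zero, zero_add,
      Real.enorm_of_nonneg (inv_nonneg.2 (norm_nonneg z))]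
    rw [mem_ball_zero_iff, not_lt] at hz
    exact ENNReal.ofReal_le_ofReal (inv_anti₀ hδ hz)

section Coulomb

variable {E : Type*} [NormedAddCommGroup E] [MeasurableSpace E] [BorelSpace E]
  [SecondCountableTopology E] {μ : Measure E}

/-- `∫ (|·|⁻¹ ∗ |f|) |g|`; on the diagonal `x = y`, a null set, Lean's division gives `0`. -/
noncomputable def coulombPairing (μ : Measure E) (f g : E → ℝ) : ℝ≥0∞ :=
  ∫⁻ x, (∫⁻ y, ENNReal.ofReal (|f y| / ‖x - y‖) ∂μ) * ENNReal.ofReal |g x| ∂μ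

theorem coulombPairing_le [SFinite μ] [μ.IsAddLeftInvariant] [μ.IsNegInvariant] {f g : E → ℝ}
    (hf : AEStronglyMeasurable f μ) (hg : AEStronglyMeasurable g μ) {δ : ℝ} (hδ : 0 < δ) :
    coulombPairing μ f g ≤
      eLpNorm f (3/2) μ * eLpNorm g (3/2) μ *
          eLpNorm (fun z : E => ‖z‖⁻¹) (3/2) (μ.restrict (ball 0 δ)) +
        ENNReal.ofReal δ⁻¹ * eLpNorm f 1 μ * eLpNorm g 1 μ := by
  set k := (ball (0 : E) δ).indicator fun z : E => ‖z‖⁻¹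
  have hk : Measurable k := measurable_norm.inv.indicator measurableSet_ball
  have hsplit (x y : E) : ENNReal.ofReal (|f y| / ‖x - y‖) ≤
      ‖f y‖ₑ * ‖k (x - y)‖ₑ + ‖f y‖ₑ * ENNReal.ofReal δ⁻¹ := by
    rw [← mul_add, div_eq_mul_inv, ENNReal.ofReal_mul (abs_nonneg _), ← Real.enorm_eq_ofReal_abs,
      ← Real.enorm_of_nonneg (inv_nonneg.2 (norm_nonneg _))]
    gcongr
    exact enorm_inv_norm_le_indicator_ball_add hδ _
  calc coulombPairing μ f g
      ≤ ∫⁻ x, ((∫⁻ y, ‖f y‖ₑ * ‖k (x - y)‖ₑ ∂μ) + ENNReal.ofReal δ⁻¹ * eLpNorm f 1 μ) *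
          ‖g x‖ₑ ∂μ := by
        refine lintegral_mono fun x => mul_le_mul' ?_ (Real.enorm_eq_ofReal_abs _).ge
        refine (lintegral_mono (hsplit x)).trans_eq ?_
        rw [lintegral_add_right' _ (hf.enorm.mul_const _), lintegral_mul_const'' _ hf.enorm,
          eLpNorm_one_eq_lintegral_enorm, mul_comm (∫⁻ y, ‖f y‖ₑ ∂μ)]
    _ = ∫⁻ x, (∫⁻ y, ‖f y‖ₑ * ‖k (x - y)‖ₑ ∂μ) * ‖g x‖ₑ ∂μ +
          ENNReal.ofReal δ⁻¹ * eLpNorm f 1 μ * eLpNorm g 1 μ := by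
        simp_rw [add_mul]
        rw [lintegral_add_right' _ (hg.enorm.const_mul _), lintegral_const_mul'' _ hg.enorm,
          eLpNorm_one_eq_lintegral_enorm (f := g)]
    _ ≤ _ := by
        gcongr
        rw [← eLpNorm_indicator_eq_eLpNorm_restrict measurableSet_ball]
        exact lintegral_enorm_mul_sub_le_eLpNorm_mul hf hg hk

end Coulomb

section FiniteDimensional

variable {E : Type*} [NormedAddCommGroup E] [NormedSpace ℝ E] [FiniteDimensional ℝ E]
  [MeasurableSpace E] [BorelSpace E] {μ : Measure E} [μ.IsAddHaarMeasure]

theorem tendsto_eLpNorm_inv_norm_restrict_ball (hd : 2 ≤ finrank ℝ E) :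
    Tendsto (fun n : ℕ => eLpNorm (fun z : E => ‖z‖⁻¹) (3/2) (μ.restrict (ball 0 (1 / (n + 1)))))
      atTop (𝓝 0) := by
  have : Nontrivial E := Module.nontrivial_of_finrank_pos (R := ℝ) (by omega)
  refine tendsto_eLpNorm_restrict_of_antitone (by simp) (by finiteness)
    (fun _ => measurableSet_ball) (fun m n hmn => ball_subset_ball ?_) ?_ ?_
  · gcongr
  · refine measure_mono_null (fun z hz => ?_) (measure_singleton 0)
    simp only [Set.mem_iInter, mem_ball_zero_iff] at hz
    exact norm_le_zero_iff.1
      (ge_of_tendsto' tendsto_one_div_add_atTop_nhds_zero_nat fun n => (hz n).le)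
  · have hint : IntegrableOn (fun z : E => ‖‖z‖⁻¹‖ ^ (3/2 : ℝ≥0∞).toReal) (ball 0 1) μ := by
      refine integrableOn_ball_of_norm_le_rpow (C := 1) (α := 3/2) (by omega) ?_
        (ae_of_all _ fun z => le_of_eq ?_)
        (measurable_norm.inv.norm.pow_const _).aestronglyMeasurable
      · have : (2 : ℝ) ≤ finrank ℝ E := by exact_mod_cast hd
        linarith
      · rw [one_mul, Real.rpow_neg (norm_nonneg _), ← Real.inv_rpow (norm_nonneg _)]
        norm_num
        positivity
    have hmem : MemLp (fun z : E => ‖z‖⁻¹) (3/2) (μ.restrict (ball 0 1)) :=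
      (integrable_norm_rpow_iff measurable_norm.inv.aestronglyMeasurable (by simp)
        (by finiteness)).1 hint
    simpa using hmem.eLpNorm_ne_top

theorem tendsto_coulombPairing_zero (hd : 2 ≤ finrank ℝ E) {ι : Type*} {l : Filter ι}
    {f g : ι → E → ℝ} (hf : ∀ i, AEStronglyMeasurable (f i) μ)
    (hg : ∀ i, AEStronglyMeasurable (g i) μ) {Cf Cg Cg' : ℝ≥0∞} (hCf : Cf ≠ ∞) (hCg : Cg ≠ ∞)
    (hCg' : Cg' ≠ ∞) (hf_bdd : ∀ i, eLpNorm (f i) (3/2) μ ≤ Cf)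
    (hg_bdd : ∀ i, eLpNorm (g i) (3/2) μ ≤ Cg) (hg_bdd' : ∀ i, eLpNorm (g i) 1 μ ≤ Cg')
    (hf_lim : Tendsto (fun i => eLpNorm (f i) 1 μ) l (𝓝 0)) :
    Tendsto (fun i => coulombPairing μ (f i) (g i)) l (𝓝 0) := by
  refine ENNReal.tendsto_nhds_zero_of_eventually_le_add (l' := atTop)
    (b := fun n : ℕ =>
      Cf * Cg * eLpNorm (fun z : E => ‖z‖⁻¹) (3/2) (μ.restrict (ball 0 (1 / (n + 1)))))
    (c := fun n i => ENNReal.ofReal (1 / (n + 1))⁻¹ * eLpNorm (f i) 1 μ * Cg')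
    ?_ (fun n => ?_) (Eventually.of_forall fun n i => ?_)
  · simpa using ENNReal.Tendsto.const_mul (tendsto_eLpNorm_inv_norm_restrict_ball hd)
      (Or.inr (ENNReal.mul_ne_top hCf hCg))
  · simpa using ENNReal.Tendsto.mul_const
      (ENNReal.Tendsto.const_mul hf_lim (Or.inr ENNReal.ofReal_ne_top)) (Or.inr hCg')
  · refine (coulombPairing_le (hf i) (hg i) (δ := 1 / (n + 1)) (by positivity)).trans ?_
    exact add_le_add (mul_le_mul_left (mul_le_mul' (hf_bdd i) (hg_bdd i)) _)
      (mul_le_mul_right (hg_bdd' i) _)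

end FiniteDimensional

/-- Let `Q ∈ L²(ℝ³) ∩ L⁶(ℝ³)` and let `(v_n)`, `(w_n)` be bounded sequences in `L²(ℝ³)` with
`v_n → 0` in `L²(K)` for every compact `K`. Then
`∫ (|·|⁻¹ * |Q v_n|)(x) |Q(x) w_n(x)| dx → 0`. -/
theorem stmt_9 (Q : EuclideanSpace ℝ (Fin 3) → ℝ)
    (hQ2 : MemLp Q 2 volume) (hQ6 : MemLp Q 6 volume)
    (v w : ℕ → EuclideanSpace ℝ (Fin 3) → ℝ)
    (hv_meas : ∀ n, AEStronglyMeasurable (v n) volume)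
    (hw_meas : ∀ n, AEStronglyMeasurable (w n) volume)
    (hv_bdd : ∃ M : ℝ, ∀ n, eLpNorm (v n) 2 volume ≤ ENNReal.ofReal M)
    (hw_bdd : ∃ M : ℝ, ∀ n, eLpNorm (w n) 2 volume ≤ ENNReal.ofReal M)
    (hv_loc : ∀ K : Set (EuclideanSpace ℝ (Fin 3)), IsCompact K →
      Tendsto (fun n => eLpNorm (v n) 2 (volume.restrict K)) atTop (nhds 0)) :
    Tendsto (fun n =>
        ∫⁻ x, (∫⁻ y, ENNReal.ofReal (|Q y * v n y| / ‖x - y‖)) *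
          ENNReal.ofReal (|Q x * w n x|))
      atTop (nhds 0) := by
  obtain ⟨Mv, hMv⟩ := hv_bdd
  obtain ⟨Mw, hMw⟩ := hw_bdd
  have : ENNReal.HolderTriple 6 2 (3/2) := ⟨by
    rw [← ENNReal.toReal_eq_toReal_iff' (by simp) (by simp),
      ENNReal.toReal_add (by simp) (by simp)]
    norm_num [ENNReal.toReal_inv]⟩
  have hL32 {u : ℕ → EuclideanSpace ℝ (Fin 3) → ℝ} (hu : ∀ n, AEStronglyMeasurable (u n) volume)
      {M : ℝ} (hM : ∀ n, eLpNorm (u n) 2 volume ≤ ENNReal.ofReal M) (n : ℕ) :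
      eLpNorm (Q * u n) (3/2) volume ≤ eLpNorm Q 6 volume * ENNReal.ofReal M :=
    (eLpNorm_mul_le_mul_eLpNorm (p := 6) (q := 2) hQ6.1 (hu n)).trans (mul_le_mul_right (hM n) _)
  exact tendsto_coulombPairing_zero (by simp) (fun n => hQ2.1.mul (hv_meas n))
    (fun n => hQ2.1.mul (hw_meas n)) (by finiteness [hQ6.eLpNorm_ne_top])
    (by finiteness [hQ6.eLpNorm_ne_top]) (by finiteness [hQ2.eLpNorm_ne_top])
    (hL32 hv_meas hMv) (hL32 hw_meas hMw)
    (fun n => (eLpNorm_mul_le_mul_eLpNorm (p := 2) (q := 2) hQ2.1 (hw_meas n)).trans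
      (mul_le_mul_right (hMw n) _))
    (tendsto_eLpNorm_one_mul_of_tendsto_restrict_closedBall 0 hQ2 hv_meas ENNReal.ofReal_ne_top
      hMv fun r => hv_loc _ (isCompact_closedBall 0 r))
end
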